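/- arXiv:1408.2855 — 3 statements merged into one kernel-verified Lean document; each statement's English description precedes it below -/
import Mathlib

section
/- Let g₁, g₂ be real numbers and let a₁, a₂ be integers with a₁ ≠ 0 and a₂ ≠ 0. Then a₁² + a₂² − (g₁a₁ + g₂a₂)²/(1 + g₁² + g₂²) ≥ 1/(1 + min(g₁², g₂²)). Consequently, the computation rate log₂((a₁² + a₂² − (g₁a₁ + g₂a₂)²/(1 + g₁² + g₂²))⁻¹) of any integer equation coefficient vector with both components nonzero is at most log₂(1 + min(g₁², g₂²)). -/
/-- Theorem 1 of the paper (non-unit-vector case): for real effective channel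
coefficients `g₁, g₂` and nonzero integer equation coefficients `a₁, a₂`, the
effective-noise quadratic is at least `1 / (1 + min(g₁², g₂²))`, and hence the
computation rate is at most `log₂(1 + min(g₁², g₂²))`. -/
theorem computation_rate_upper_bound (g₁ g₂ : ℝ) (a₁ a₂ : ℤ)
    (ha₁ : a₁ ≠ 0) (ha₂ : a₂ ≠ 0) :
    (a₁ : ℝ) ^ 2 + (a₂ : ℝ) ^ 2 - (g₁ * (a₁ : ℝ) + g₂ * (a₂ : ℝ)) ^ 2 / (1 + g₁ ^ 2 + g₂ ^ 2)
      ≥ 1 / (1 + min (g₁ ^ 2) (g₂ ^ 2)) ∧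
    Real.logb 2 (((a₁ : ℝ) ^ 2 + (a₂ : ℝ) ^ 2 -
        (g₁ * (a₁ : ℝ) + g₂ * (a₂ : ℝ)) ^ 2 / (1 + g₁ ^ 2 + g₂ ^ 2))⁻¹)
      ≤ Real.logb 2 (1 + min (g₁ ^ 2) (g₂ ^ 2)) := by
  have h1 : (1:ℝ) ≤ (a₁:ℝ)^2 := by
    have := Int.one_le_abs ha₁
    have : (1:ℝ) ≤ |(a₁:ℝ)| := by exact_mod_cast (by push_cast; exact_mod_cast this : (1:ℝ) ≤ |(a₁:ℝ)|)
    nlinarith [abs_nonneg ((a₁:ℝ)), sq_abs ((a₁:ℝ))]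
  have h2 : (1:ℝ) ≤ (a₂:ℝ)^2 := by
    have := Int.one_le_abs ha₂
    have : (1:ℝ) ≤ |(a₂:ℝ)| := by exact_mod_cast (by push_cast; exact_mod_cast this : (1:ℝ) ≤ |(a₂:ℝ)|)
    nlinarith [abs_nonneg ((a₂:ℝ)), sq_abs ((a₂:ℝ))]
  have hD : (0:ℝ) < 1 + g₁^2 + g₂^2 := by positivity
  have hm : (0:ℝ) < 1 + min (g₁^2) (g₂^2) := by
    rcases le_total (g₁^2) (g₂^2) with h | h
    · rw [min_eq_left h]; positivity
    · rw [min_eq_right h]; positivity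
  have hQeq : (a₁ : ℝ) ^ 2 + (a₂ : ℝ) ^ 2 - (g₁ * (a₁ : ℝ) + g₂ * (a₂ : ℝ)) ^ 2 / (1 + g₁ ^ 2 + g₂ ^ 2)
      = ((a₁:ℝ)^2 + (a₂:ℝ)^2 + (g₁*(a₂:ℝ) - g₂*(a₁:ℝ))^2) / (1 + g₁^2 + g₂^2) := by
    field_simp
    ring
  have key : (a₁ : ℝ) ^ 2 + (a₂ : ℝ) ^ 2 - (g₁ * (a₁ : ℝ) + g₂ * (a₂ : ℝ)) ^ 2 / (1 + g₁ ^ 2 + g₂ ^ 2)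
      ≥ 1 / (1 + min (g₁ ^ 2) (g₂ ^ 2)) := by
    rw [hQeq, ge_iff_le, div_le_div_iff₀ hm hD]
    rcases le_total (g₁^2) (g₂^2) with h | h
    · rw [min_eq_left h]
      nlinarith [sq_nonneg ((a₂:ℝ) + (g₁*(a₂:ℝ) - g₂*(a₁:ℝ))*g₁), sq_nonneg (g₁*(a₂:ℝ) - g₂*(a₁:ℝ)), sq_nonneg g₁, mul_le_mul h1 h2 (by linarith) (by linarith)]
    · rw [min_eq_right h]
      nlinarith [sq_nonneg ((a₁:ℝ) + (g₂*(a₁:ℝ) - g₁*(a₂:ℝ))*g₂), sq_nonneg (g₁*(a₂:ℝ) - g₂*(a₁:ℝ)), sq_nonneg g₂, mul_le_mul h1 h2 (by linarith) (by linarith)]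
  have hQpos : (0:ℝ) < (a₁ : ℝ) ^ 2 + (a₂ : ℝ) ^ 2 - (g₁ * (a₁ : ℝ) + g₂ * (a₂ : ℝ)) ^ 2 / (1 + g₁ ^ 2 + g₂ ^ 2) :=
    lt_of_lt_of_le (by positivity) key
  refine ⟨key, ?_⟩
  have hinv : ((a₁ : ℝ) ^ 2 + (a₂ : ℝ) ^ 2 - (g₁ * (a₁ : ℝ) + g₂ * (a₂ : ℝ)) ^ 2 / (1 + g₁ ^ 2 + g₂ ^ 2))⁻¹ ≤ 1 + min (g₁^2) (g₂^2) := by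
    rw [inv_le_iff_one_le_mul₀ hQpos] <;>
    · rw [ge_iff_le, div_le_iff₀ hm] at key
      nlinarith [key]
  exact Real.logb_le_logb_of_le one_lt_two (by positivity) hinv
end

section
/- Let g₁, g₂ be real numbers and let a₁, a₂ be integers with a₁ ≠ 0 and a₂ ≠ 0. Then (1 + min(g₁², g₂²)) · (a₁² + a₂² + (g₁a₂ − g₂a₁)²) ≥ 1 + g₁² + g₂². -/
/-- Core inequality (35) in the proof of Theorem 1: for real effective channel
coefficients `g₁, g₂` and nonzero integer equation coefficients `a₁, a₂`,
`(1 + min(g₁², g₂²)) · (a₁² + a₂² + (g₁a₂ − g₂a₁)²) ≥ 1 + g₁² + g₂²`. -/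
theorem core_inequality (g₁ g₂ : ℝ) (a₁ a₂ : ℤ) (ha₁ : a₁ ≠ 0) (ha₂ : a₂ ≠ 0) :
    (1 + min (g₁ ^ 2) (g₂ ^ 2)) *
        ((a₁ : ℝ) ^ 2 + (a₂ : ℝ) ^ 2 + (g₁ * (a₂ : ℝ) - g₂ * (a₁ : ℝ)) ^ 2)
      ≥ 1 + g₁ ^ 2 + g₂ ^ 2 := by
  have h1 : (1:ℝ) ≤ (a₁:ℝ)^2 := by
    have h := Int.one_le_abs (show a₁ ≠ 0 from ha₁); have : (1:ℤ) ≤ a₁^2 := by nlinarith [sq_abs a₁]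
    exact_mod_cast this
  have h2 : (1:ℝ) ≤ (a₂:ℝ)^2 := by
    have h := Int.one_le_abs (show a₂ ≠ 0 from ha₂); have : (1:ℤ) ≤ a₂^2 := by nlinarith [sq_abs a₂]
    exact_mod_cast this
  rcases min_cases (g₁^2) (g₂^2) with ⟨hm, hle⟩ | ⟨hm, hle⟩ <;> rw [hm]
  · nlinarith [sq_nonneg ((a₂:ℝ) + g₁*(g₁*a₂ - g₂*a₁)), sq_nonneg (g₁*a₂ - g₂*a₁),
      sq_nonneg g₁, sq_nonneg g₂, mul_le_mul_of_nonneg_left h2 (sq_nonneg g₁)]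
  · nlinarith [sq_nonneg ((a₁:ℝ) - g₂*(g₁*a₂ - g₂*a₁)), sq_nonneg (g₁*a₂ - g₂*a₁),
      sq_nonneg g₁, sq_nonneg g₂, mul_le_mul_of_nonneg_left h1 (sq_nonneg g₂)]
end

section
/- Let g₁, g₂ be real numbers and let a₁, a₂ be real numbers with |a₁| ≥ 1. Then a₁² + a₂² + (g₁a₂ − g₂a₁)² ≥ (1 + g₁² + g₂²)/(1 + g₁²). -/
/-- Relaxed minimization step (37)–(42) in the proof of Theorem 1: if `|a₁| ≥ 1`
then `a₁² + a₂² + (g₁a₂ − g₂a₁)² ≥ (1 + g₁² + g₂²)/(1 + g₁²)` for all real `a₂`. -/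
theorem relaxed_min_bound (g₁ g₂ a₁ a₂ : ℝ) (ha₁ : 1 ≤ |a₁|) :
    a₁ ^ 2 + a₂ ^ 2 + (g₁ * a₂ - g₂ * a₁) ^ 2 ≥ (1 + g₁ ^ 2 + g₂ ^ 2) / (1 + g₁ ^ 2) := by
  have h1 : (1:ℝ) ≤ a₁ ^ 2 := by nlinarith [sq_abs a₁, abs_nonneg a₁]
  rw [ge_iff_le, div_le_iff₀ (by positivity)]
  nlinarith [sq_nonneg ((1 + g₁ ^ 2) * a₂ - g₁ * g₂ * a₁), sq_nonneg g₂, sq_nonneg g₁, sq_nonneg (g₁ * g₂)]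
end
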